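/- Let σ > 0, 0 < α, and suppose π : ℝ → [0,1] satisfies: π(v) is within δ of 0 for all v ∈ [(a−2α)σ, aσ] and within δ of 1 for all v ∈ [(c+2b−2α)σ, (c+2b)σ], where 0 < α ≤ b ≤ a < c. Then the average increase over a uniformly random shift satisfies |E_{v ~ U[aσ, (c+2b)σ]}[π(v) − π(v − 2ασ)] − 2α/(c−a+2b)| ≤ 4αδ/(c−a+2b). -/
import Mathlib


open MeasureTheory

lemma bounded_measurable_intervalIntegrable (p : ℝ → ℝ) (hmeas : Measurable p)
    (hbd : ∀ v, |p v| ≤ 1) (u w : ℝ) : IntervalIntegrable p volume u w := by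
  rw [intervalIntegrable_iff]
  apply Measure.integrableOn_of_bounded (M := 1) measure_Ioc_lt_top.ne
    hmeas.aestronglyMeasurable
  filter_upwards with x using hbd x

/-- average increase property: if the reporting probability `p`
is within `δ` of `0` on `[(a−2α)σ, aσ]` and within `δ` of `1` on
`[(c+2b−2α)σ, (c+2b)σ]`, then the average increase of `p` over a uniformly
random shift by `2ασ` is `2α/(c−a+2b)` up to error `4αδ/(c−a+2b)`. -/
theorem average_increase_property
    (σ α a b c δ : ℝ) (hσ : 0 < σ) (hα : 0 < α) (hαb : α ≤ b) (hba : b ≤ a)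
    (hac : a < c) (hδ : 0 ≤ δ)
    (p : ℝ → ℝ) (hmeas : Measurable p) (hrange : ∀ v, p v ∈ Set.Icc (0:ℝ) 1)
    (hlow : ∀ v ∈ Set.Icc ((a - 2*α) * σ) (a * σ), |p v| ≤ δ)
    (hhigh : ∀ v ∈ Set.Icc ((c + 2*b - 2*α) * σ) ((c + 2*b) * σ), |p v - 1| ≤ δ) :
    |(1 / ((c + 2*b) * σ - a * σ)) *
        (∫ v in (a * σ)..((c + 2*b) * σ), (p v - p (v - 2*α*σ)))
      - 2*α / (c - a + 2*b)| ≤ 4*α*δ / (c - a + 2*b) := by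
  set L := a * σ with hL
  set R := (c + 2*b) * σ with hR
  set s := 2*α*σ with hs
  have hbd : ∀ v, |p v| ≤ 1 := by
    intro v
    have := hrange v
    rw [abs_le]
    constructor <;> [linarith [this.1]; exact this.2]
  have hint : ∀ u w : ℝ, IntervalIntegrable p volume u w :=
    bounded_measurable_intervalIntegrable p hmeas hbd
  have hint' : ∀ u w : ℝ, IntervalIntegrable (fun v => p (v - s)) volume u w := by
    intro u w
    exact bounded_measurable_intervalIntegrable _
      (hmeas.comp (measurable_id.sub measurable_const)) (fun v => hbd _) u w
  have hspos : 0 < s := by positivity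
  have hLR : L ≤ R := by
    rw [hL, hR]
    nlinarith
  -- step 1: split the integral
  have h1 : (∫ v in L..R, (p v - p (v - s)))
      = (∫ v in L..R, p v) - ∫ v in (L - s)..(R - s), p v := by
    rw [intervalIntegral.integral_sub (hint _ _) (hint' _ _)]
    congr 1
    exact intervalIntegral.integral_comp_sub_right p s
  have h2 : (∫ v in L..R, p v) = (∫ v in L..(R - s), p v) + ∫ v in (R - s)..R, p v :=
    (intervalIntegral.integral_add_adjacent_intervals (hint _ _) (hint _ _)).symm
  have h3 : (∫ v in (L - s)..(R - s), p v)
      = (∫ v in (L - s)..L, p v) + ∫ v in L..(R - s), p v :=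
    (intervalIntegral.integral_add_adjacent_intervals (hint _ _) (hint _ _)).symm
  -- estimates on the boundary integrals
  have hLlow : L - s = (a - 2*α) * σ := by rw [hL, hs]; ring
  have hRlow : R - s = (c + 2*b - 2*α) * σ := by rw [hR, hs]; ring
  have hA : |∫ v in (L - s)..L, p v| ≤ δ * s := by
    have := intervalIntegral.norm_integral_le_of_norm_le_const (C := δ)
      (f := p) (a := L - s) (b := L) ?_
    · calc |∫ v in (L - s)..L, p v| ≤ δ * |L - (L - s)| := this
        _ = δ * s := by rw [show L - (L - s) = s by ring, abs_of_pos hspos]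
    · intro x hx
      rw [Set.uIoc_of_le (by linarith)] at hx
      rw [Real.norm_eq_abs]
      exact hlow x ⟨by rw [← hLlow]; linarith [hx.1], by linarith [hx.2]⟩
  have hB : |(∫ v in (R - s)..R, p v) - s| ≤ δ * s := by
    have hconst : (∫ v in (R - s)..R, (1:ℝ)) = s := by
      simp [intervalIntegral.integral_const]
    have heq : (∫ v in (R - s)..R, p v) - s = ∫ v in (R - s)..R, (p v - 1) := by
      rw [intervalIntegral.integral_sub (hint _ _) intervalIntegrable_const, hconst]
    rw [heq]
    have := intervalIntegral.norm_integral_le_of_norm_le_const (C := δ)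
      (f := fun v => p v - 1) (a := R - s) (b := R) ?_
    · calc |∫ v in (R - s)..R, (p v - 1)| ≤ δ * |R - (R - s)| := this
        _ = δ * s := by rw [show R - (R - s) = s by ring, abs_of_pos hspos]
    · intro x hx
      rw [Set.uIoc_of_le (by linarith)] at hx
      rw [Real.norm_eq_abs]
      exact hhigh x ⟨by rw [← hRlow]; linarith [hx.1], by linarith [hx.2]⟩
  have key : |(∫ v in L..R, (p v - p (v - s))) - s| ≤ 2 * δ * s := by
    have : (∫ v in L..R, (p v - p (v - s))) - s
        = ((∫ v in (R - s)..R, p v) - s) - (∫ v in (L - s)..L, p v) := by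
      rw [h1, h2, h3]; ring
    rw [this]
    calc |((∫ v in (R - s)..R, p v) - s) - (∫ v in (L - s)..L, p v)|
        ≤ |(∫ v in (R - s)..R, p v) - s| + |∫ v in (L - s)..L, p v| := abs_sub _ _
      _ ≤ δ * s + δ * s := add_le_add hB hA
      _ = 2 * δ * s := by ring
  -- final arithmetic
  have he : (0:ℝ) < c - a + 2*b := by nlinarith
  have hD : R - L = (c - a + 2*b) * σ := by rw [hL, hR]; ring
  have hne1 : c - a + 2*b ≠ 0 := ne_of_gt he
  have hne2 : σ ≠ 0 := ne_of_gt hσ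
  have hrw : (1 / (R - L)) * (∫ v in L..R, (p v - p (v - s))) - 2*α / (c - a + 2*b)
      = ((∫ v in L..R, (p v - p (v - s))) - s) / ((c - a + 2*b) * σ) := by
    rw [hD, hs]
    field_simp
  rw [hrw, abs_div, abs_of_pos (mul_pos he hσ), div_le_div_iff₀ (mul_pos he hσ) he]
  calc |(∫ v in L..R, (p v - p (v - s))) - s| * (c - a + 2*b)
      ≤ (2 * δ * s) * (c - a + 2*b) := by
        apply mul_le_mul_of_nonneg_right key (le_of_lt he)
    _ = 4*α*δ * ((c - a + 2*b) * σ) := by rw [hs]; ring
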